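/- Let η ≥ 1, let (G, k) be an instance of Treedepth-η Deletion, and let ℓ be a non-negative integer. Let X ⊆ V(G) and let {u, v} be a pair of distinct non-adjacent vertices of G. If (1) the graph G[X ∪ {u, v}] contains at least ℓ + η pairwise internally vertex-disjoint paths between u and v, and (2) G has a minimum-size treedepth-η modulator containing at most ℓ vertices of X, then G has a treedepth-η modulator of size at most k if and only if G + {u, v} (the graph obtained from G by adding the edge {u, v}) has a treedepth-η modulator of size at most k. -/

import Mathlib

/-- A rooted forest on the vertex type `V`, given by a parent function.
Acyclicity guarantees that following parents never returns to a vertex. -/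
structure RootedForest (V : Type*) where
  parent : V → Option V
  acyclic : ∀ v : V, ¬ Relation.TransGen (fun a b => parent a = some b) v v

namespace RootedForest

variable {V : Type*} (F : RootedForest V)

/-- `F.Anc x y` means that `y` is an ancestor of `x` in the rooted forest `F`
(every vertex is an ancestor of itself). -/
def Anc (x y : V) : Prop :=
  Relation.ReflTransGen (fun a b => F.parent a = some b) x y

/-- `F.ProperAnc x y` means that `y` is a proper ancestor of `x`. -/
def ProperAnc (x y : V) : Prop :=
  Relation.TransGen (fun a b => F.parent a = some b) x y

/-- `x` and `y` are in ancestor–descendant relation in `F`. -/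
def AncDesc (x y : V) : Prop := F.Anc x y ∨ F.Anc y x

/-- The depth of `v` in `F`: the number of vertices on the path from `v`
to the root of its tree (including both endpoints). -/
noncomputable def depth (v : V) : ℕ := Nat.card {u : V // F.Anc v u}

/-- The height of the forest: the maximum depth of a vertex. -/
noncomputable def height : ℕ := sSup (Set.range F.depth)

/-- The reach of `v` in `F`. -/
noncomputable def reach (v : V) : ℕ := F.height - F.depth v

/-- The vertex set of the subtree of `F` rooted at `v` (all descendants of `v`,
including `v` itself). -/
def subtree (v : V) : Set V := {u : V | F.Anc u v}

/-- `x` and `y` lie in the same tree of the forest, i.e. they have a common ancestor. -/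
def SameTree (x y : V) : Prop := ∃ w : V, F.Anc x w ∧ F.Anc y w

end RootedForest

/-- `F` is a treedepth decomposition of `G`: a rooted forest on the vertex set of `G`
such that the endpoints of every edge are in ancestor–descendant relation. -/
def SimpleGraph.IsTreedepthDecomp {V : Type*} (G : SimpleGraph V) (F : RootedForest V) : Prop :=
  ∀ ⦃u v : V⦄, G.Adj u v → F.AncDesc u v

/-- The treedepth of `G`: the minimum height of a treedepth decomposition of `G`. -/
noncomputable def SimpleGraph.treedepth {V : Type*} (G : SimpleGraph V) : ℕ :=
  sInf {n : ℕ | ∃ F : RootedForest V, G.IsTreedepthDecomp F ∧ F.height = n}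

/-- The open neighborhood of a vertex set `S`: all vertices outside `S`
with a neighbor in `S`. -/
def SimpleGraph.nbhdSet {V : Type*} (G : SimpleGraph V) (S : Set V) : Set V :=
  {u : V | u ∉ S ∧ ∃ s ∈ S, G.Adj u s}

/-- `Z` is a treedepth-`η` modulator of `G`: removing `Z` leaves a graph of
treedepth at most `η`. -/
def SimpleGraph.IsTdMod {V : Type*} (G : SimpleGraph V) (η : ℕ) (Z : Set V) : Prop :=
  (G.induce Zᶜ).treedepth ≤ η

/-- `G` contains `m` pairwise internally vertex-disjoint paths between `u` and `v`. -/
def IntDisjointPaths {V : Type*} (G : SimpleGraph V) (u v : V) (m : ℕ) : Prop :=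
  ∃ P : Fin m → G.Walk u v, (∀ i, (P i).IsPath) ∧
    ∀ i j, i ≠ j → ∀ w, w ∈ (P i).support → w ∈ (P j).support → w = u ∨ w = v

/-- A treedepth decomposition is nice if every subtree induces a connected subgraph. -/
def IsNiceDecomp {V : Type*} (G : SimpleGraph V) (F : RootedForest V) : Prop :=
  ∀ v : V, (G.induce (F.subtree v)).Connected

/-!
Let `Z` be a minimum treedepth-`η` modulator of `G` with `|Z ∩ X| ≤ ℓ`. If `Z` contains `u` or `v`,
adding the edge `uv` does not change `G - Z`. Otherwise the internally disjoint `u`–`v` paths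
have their inner vertices in `X`, so at most `ℓ` of them meet `Z` and at least `η` survive in
`G - Z`. In a decomposition of `G - Z` of height at most `η`, if `u` and `v` were unrelated, the
shallowest vertex of each surviving path would be a common ancestor of `u` and `v`, and these are
pairwise distinct, giving `u` more than `η` ancestors. So `u` and `v` are related, the same
decomposition works for `G + uv - Z`, and `Z` is also a modulator of `G + uv`.
-/

namespace RootedForest

variable {W : Type*} {F : RootedForest W}

theorem anc_refl (a : W) : F.Anc a a := Relation.ReflTransGen.refl

theorem Anc.trans {a b c : W} (hab : F.Anc a b) (hbc : F.Anc b c) : F.Anc a c :=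
  Relation.ReflTransGen.trans hab hbc

theorem Anc.antisymm {a b : W} (hab : F.Anc a b) (hba : F.Anc b a) : a = b := by
  rcases Relation.reflTransGen_iff_eq_or_transGen.mp hab with rfl | hab
  · rfl
  · exact (F.acyclic a (hab.trans_left hba)).elim

theorem Anc.total_of_anc {v a b : W} (ha : F.Anc v a) (hb : F.Anc v b) :
    F.Anc a b ∨ F.Anc b a := by
  induction ha using Relation.ReflTransGen.head_induction_on with
  | refl => exact Or.inl hb
  | head hstep hrest ih =>
    rcases Relation.ReflTransGen.cases_head hb with rfl | ⟨c, hstep', hb'⟩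
    · exact Or.inr (Relation.ReflTransGen.head hstep hrest)
    · cases hstep.symm.trans hstep'
      exact ih hb'

theorem depth_eq_ncard (v : W) : F.depth v = {u | F.Anc v u}.ncard :=
  Nat.card_coe_set_eq _

variable [Finite W]

theorem depth_lt_depth_of_anc {a b : W} (h : F.Anc a b) (hne : a ≠ b) :
    F.depth b < F.depth a := by
  rw [depth_eq_ncard, depth_eq_ncard]
  refine Set.ncard_lt_ncard ⟨fun x hx => h.trans hx, fun hsub => hne ?_⟩
  exact h.antisymm (hsub (anc_refl a))

theorem depth_le_height (v : W) : F.depth v ≤ F.height :=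
  le_csSup (Set.finite_range _).bddAbove ⟨v, rfl⟩

theorem Anc.anc_of_depth_le {v a b : W} (ha : F.Anc v a) (hb : F.Anc v b)
    (hd : F.depth a ≤ F.depth b) : F.Anc b a := by
  obtain rfl | hne := eq_or_ne a b
  · exact anc_refl a
  · exact (ha.total_of_anc hb).resolve_left fun hab => hd.not_gt (depth_lt_depth_of_anc hab hne)

end RootedForest

section ChainForest

variable (α : Type*) [LinearOrder α] [SuccOrder α]

open Classical in
noncomputable def RootedForest.chain : RootedForest α where
  parent a := if IsMax a then none else some (Order.succ a)
  acyclic v hv := by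
    have hlt : ∀ a b : α, (if IsMax a then none else some (Order.succ a)) = some b → a < b := by
      intro a b h
      split_ifs at h with hmax
      cases h
      exact Order.lt_succ_of_not_isMax hmax
    have hvv := Relation.TransGen.mono hlt _ _ hv
    rw [Relation.transGen_eq_self] at hvv
    exact lt_irrefl v hvv

variable {α} [IsSuccArchimedean α]

theorem RootedForest.chain_anc_of_le {a b : α} (h : a ≤ b) : (chain α).Anc a b :=
  reflTransGen_of_succ_of_le _ (fun _ hi => if_neg (not_isMax_of_lt hi.2)) h

theorem SimpleGraph.isTreedepthDecomp_chain (H : SimpleGraph α) :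
    H.IsTreedepthDecomp (RootedForest.chain α) := fun a b _ =>
  (le_total a b).imp RootedForest.chain_anc_of_le RootedForest.chain_anc_of_le

end ChainForest

namespace SimpleGraph

variable {W : Type*}

theorem IsTreedepthDecomp.treedepth_le_height {H : SimpleGraph W} {F : RootedForest W}
    (hF : H.IsTreedepthDecomp F) : H.treedepth ≤ F.height :=
  Nat.sInf_le ⟨F, hF, rfl⟩

theorem isTreedepthDecomp_induce_sup_edge {G : SimpleGraph W} {u v : W} {T : Set W} {F : RootedForest T}
    (hF : (G.induce T).IsTreedepthDecomp F)
    (huv : ∀ (hu : u ∈ T) (hv : v ∈ T), F.AncDesc ⟨u, hu⟩ ⟨v, hv⟩) :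
    ((G ⊔ fromEdgeSet {s(u, v)}).induce T).IsTreedepthDecomp F := by
  rintro ⟨a, ha⟩ ⟨b, hb⟩ hab
  simp only [comap_adj, Function.Embedding.subtype_apply, sup_adj, fromEdgeSet_adj,
    Set.mem_singleton_iff, Sym2.eq_iff] at hab
  rcases hab with hab | ⟨⟨rfl, rfl⟩ | ⟨rfl, rfl⟩, -⟩
  · exact hF hab
  · exact huv ha hb
  · exact Or.symm (huv hb ha)

section Finite

variable [Finite W]

theorem exists_isTreedepthDecomp (H : SimpleGraph W) : ∃ F, H.IsTreedepthDecomp F := by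
  let : LinearOrder W := LinearOrder.lift' _ (Finite.equivFin W).injective
  let : SuccOrder W := SuccOrder.ofLinearWellFoundedLT W
  exact ⟨_, H.isTreedepthDecomp_chain⟩

theorem exists_isTreedepthDecomp_height_eq_treedepth (H : SimpleGraph W) :
    ∃ F, H.IsTreedepthDecomp F ∧ F.height = H.treedepth := by
  obtain ⟨F, hF⟩ := H.exists_isTreedepthDecomp
  exact Nat.sInf_mem (s := {n | ∃ F : RootedForest W, H.IsTreedepthDecomp F ∧ F.height = n})
    ⟨F.height, F, hF, rfl⟩

theorem treedepth_mono {H H' : SimpleGraph W} (h : H ≤ H') : H.treedepth ≤ H'.treedepth := by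
  obtain ⟨F, hF, hFh⟩ := H'.exists_isTreedepthDecomp_height_eq_treedepth
  exact hFh ▸ (show H.IsTreedepthDecomp F from fun _ _ hab => hF (h hab)).treedepth_le_height

end Finite

variable {V ι : Type*} {G : SimpleGraph V} {u v : V}

def Walk.InternallyDisjoint (P : ι → G.Walk u v) : Prop :=
  ∀ i j, i ≠ j → ∀ w ∈ (P i).support, w ∈ (P j).support → w = u ∨ w = v

namespace Walk.InternallyDisjoint

variable {P : ι → G.Walk u v}

theorem comp {κ : Type*} (hP : InternallyDisjoint P) {g : κ → ι} (hg : g.Injective) :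
    InternallyDisjoint (P ∘ g) :=
  fun _ _ hij => hP _ _ (hg.ne hij)

theorem map {V' : Type*} {G' : SimpleGraph V'} (hP : InternallyDisjoint P) (f : G →g G')
    (hf : Function.Injective f) : InternallyDisjoint fun i => (P i).map f := by
  intro i j hij w hwi hwj
  rw [support_map, List.mem_map] at hwi hwj
  obtain ⟨x, hxi, rfl⟩ := hwi
  obtain ⟨y, hyj, hyx⟩ := hwj
  cases hf hyx
  exact (hP i j hij x hxi hyj).imp (congrArg f) (congrArg f)

theorem induce {s : Set V} (hP : InternallyDisjoint P) (hu : u ∈ s) (hv : v ∈ s)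
    (hs : ∀ i, ∀ x ∈ (P i).support, x ∈ s) :
    InternallyDisjoint (G := G.induce s) (u := ⟨u, hu⟩) (v := ⟨v, hv⟩)
      fun i => (P i).induce s (hs i) := by
  intro i j hij w hwi hwj
  simp only [support_induce, List.mem_attachWith] at hwi hwj
  exact (hP i j hij w hwi hwj).imp Subtype.ext Subtype.ext

end Walk.InternallyDisjoint

end SimpleGraph

namespace SimpleGraph.IsTreedepthDecomp

open RootedForest

variable {W : Type*} [Finite W] {H : SimpleGraph W} {F : RootedForest W}

theorem anc_of_mem_support (hF : H.IsTreedepthDecomp F) {w a b : W} (p : H.Walk a b)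
    (hdepth : ∀ x ∈ p.support, F.depth w ≤ F.depth x) (ha : F.Anc a w) :
    ∀ x ∈ p.support, F.Anc x w := by
  induction p with
  | nil => simpa using ha
  | cons hadj q ih =>
    have hc : F.Anc _ w := (hF hadj).elim
      (fun h => ha.anc_of_depth_le h (hdepth _ (by simp))) (fun h => h.trans ha)
    simp only [Walk.support_cons, List.mem_cons, forall_eq_or_imp] at hdepth ⊢
    exact ⟨ha, ih hdepth.2 hc⟩

/-- The shallowest vertex of a walk is a common ancestor of its endpoints. -/
theorem exists_mem_support_anc_anc (hF : H.IsTreedepthDecomp F) {a b : W} (p : H.Walk a b) :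
    ∃ w ∈ p.support, F.Anc a w ∧ F.Anc b w := by
  classical
  obtain ⟨w, hw, hmin⟩ := Set.exists_min_image {x | x ∈ p.support} F.depth (Set.toFinite _)
    ⟨a, p.start_mem_support⟩
  refine ⟨w, hw, ?_, ?_⟩
  · refine hF.anc_of_mem_support (p.takeUntil w hw).reverse (fun x hx => hmin x ?_)
      (anc_refl w) a (by simp)
    exact p.support_takeUntil_subset_support hw (by simpa using hx)
  · exact hF.anc_of_mem_support (p.dropUntil w hw)
      (fun x hx => hmin x (p.support_dropUntil_subset_support hw hx)) (anc_refl w) b (by simp)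

/-- If `u` and `v` were unrelated, the common ancestors given by `η` internally disjoint walks
would be `η` distinct proper ancestors of `u`. -/
theorem ancDesc_of_internallyDisjoint (hF : H.IsTreedepthDecomp F) {η : ℕ}
    (hheight : F.height ≤ η) {u v : W} {P : Fin η → H.Walk u v}
    (hP : Walk.InternallyDisjoint P) : F.AncDesc u v := by
  by_contra hnad
  choose w hmem hu hv using fun i => hF.exists_mem_support_anc_anc (P i)
  have hwu : ∀ i, w i ≠ u := fun i h => hnad (Or.inr (h ▸ hv i))
  have hw_inj : w.Injective := fun i j hij => by
    by_contra hne
    exact (hP i j hne (w i) (hmem i) (hij ▸ hmem j)).elim (hwu i)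
      fun h => hnad (Or.inl (h ▸ hu i))
  have hsub : insert u (Set.range w) ⊆ {x | F.Anc u x} :=
    Set.insert_subset (anc_refl u) (Set.range_subset_iff.2 hu)
  have hcard := Set.ncard_le_ncard hsub
  rw [Set.ncard_insert_of_notMem (by rintro ⟨i, hi⟩; exact hwu i hi),
    Set.ncard_range_of_injective hw_inj, Nat.card_fin, ← depth_eq_ncard] at hcard
  have := depth_le_height (F := F) u
  omega

end SimpleGraph.IsTreedepthDecomp

theorem exists_injective_forall_notMem {ι : Type*} [Finite ι] {s : Set ι} {n : ℕ}
    (h : s.ncard + n ≤ Nat.card ι) : ∃ g : Fin n → ι, g.Injective ∧ ∀ i, g i ∉ s := by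
  have hn : n ≤ Nat.card ↥sᶜ := by
    rw [Nat.card_coe_set_eq, Set.ncard_compl]
    omega
  let e := (Finite.equivFin ↥sᶜ).symm
  exact ⟨fun i => e (Fin.castLE hn i),
    Subtype.val_injective.comp (e.injective.comp (Fin.castLE_injective hn)),
    fun i => (e (Fin.castLE hn i)).2⟩

namespace SimpleGraph.Walk.InternallyDisjoint

variable {V ι : Type*} [Finite V] {G : SimpleGraph V} {u v : V} {P : ι → G.Walk u v}

theorem ncard_setOf_exists_mem_support_le (hP : InternallyDisjoint P) {Y : Set V} (hu : u ∉ Y)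
    (hv : v ∉ Y) : {i | ∃ w ∈ (P i).support, w ∈ Y}.ncard ≤ Y.ncard := by
  have : Nonempty V := ⟨u⟩
  let f i := Classical.epsilon fun w => w ∈ (P i).support ∧ w ∈ Y
  have hf : ∀ i ∈ {i | ∃ w ∈ (P i).support, w ∈ Y}, f i ∈ (P i).support ∧ f i ∈ Y :=
    fun _ hi => Classical.epsilon_spec (p := fun w => _ ∧ w ∈ Y) (by simpa using hi)
  refine Set.ncard_le_ncard_of_injOn f (fun i hi => (hf i hi).2) (fun i hi j hj hij => ?_)
  by_contra hne
  rcases hP i j hne (f i) (hf i hi).1 (hij ▸ (hf j hj).1) with h | h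
  · exact hu (h ▸ (hf i hi).2)
  · exact hv (h ▸ (hf i hi).2)

end SimpleGraph.Walk.InternallyDisjoint

namespace SimpleGraph

variable {V : Type*} [Finite V] {G : SimpleGraph V} {u v : V}

theorem exists_internallyDisjoint_induce_compl {ℓ η : ℕ} {X Z : Set V}
    {P : Fin (ℓ + η) → G.Walk u v} (hP : Walk.InternallyDisjoint P)
    (hPX : ∀ i, ∀ w ∈ (P i).support, w ∈ X ∪ {u, v}) (hZX : (Z ∩ X).ncard ≤ ℓ)
    (hu : u ∉ Z) (hv : v ∉ Z) :
    ∃ Q : Fin η → (G.induce Zᶜ).Walk ⟨u, hu⟩ ⟨v, hv⟩, Walk.InternallyDisjoint Q := by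
  have hbad := hP.ncard_setOf_exists_mem_support_le (Y := Z ∩ X) (hu ·.1) (hv ·.1)
  obtain ⟨g, hg, hgood⟩ := exists_injective_forall_notMem (n := η)
    (by rw [Nat.card_fin]; exact Nat.add_le_add_right (hbad.trans hZX) η)
  have havoid : ∀ i, ∀ w ∈ (P (g i)).support, w ∈ Zᶜ := by
    intro i w hw hwZ
    simp only [Set.mem_union, Set.mem_insert_iff, Set.mem_singleton_iff] at hPX
    obtain hwX | rfl | rfl := hPX _ w hw
    exacts [hgood i ⟨w, hw, hwZ, hwX⟩, hu hwZ, hv hwZ]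
  exact ⟨_, (hP.comp hg).induce hu hv havoid⟩

variable {η : ℕ} {Z : Set V}

theorem IsTdMod.of_le {G' : SimpleGraph V} (h : G ≤ G') (hZ : G'.IsTdMod η Z) :
    G.IsTdMod η Z :=
  (treedepth_mono (H := G.induce Zᶜ) (H' := G'.induce Zᶜ) fun _ _ hab => h hab).trans hZ

theorem IsTdMod.sup_edge (hZ : G.IsTdMod η Z)
    (hpaths : ∀ (hu : u ∉ Z) (hv : v ∉ Z),
      ∃ P : Fin η → (G.induce Zᶜ).Walk ⟨u, hu⟩ ⟨v, hv⟩, Walk.InternallyDisjoint P) :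
    (G ⊔ fromEdgeSet {s(u, v)}).IsTdMod η Z := by
  obtain ⟨F, hF, hFh⟩ := (G.induce Zᶜ).exists_isTreedepthDecomp_height_eq_treedepth
  have hheight : F.height ≤ η := hFh ▸ hZ
  refine ((isTreedepthDecomp_induce_sup_edge hF fun hu hv => ?_).treedepth_le_height).trans hheight
  obtain ⟨P, hP⟩ := hpaths hu hv
  exact hF.ancDesc_of_internallyDisjoint hheight hP

end SimpleGraph

/-- Edge addition lemma: under the stated conditions, `(G, k)` and `(G + {u,v}, k)` are
equivalent instances of Treedepth-η Deletion. -/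
theorem edge_addition_lemma {V : Type*} [Fintype V] (η k ℓ : ℕ)
    (G : SimpleGraph V) (X : Set V) (u v : V)
    (h1 : IntDisjointPaths (G.induce (X ∪ {u, v}))
      ⟨u, by simp⟩ ⟨v, by simp⟩ (ℓ + η))
    (h2 : ∃ Z : Set V, G.IsTdMod η Z ∧
      (∀ Z' : Set V, G.IsTdMod η Z' → Z.ncard ≤ Z'.ncard) ∧ (Z ∩ X).ncard ≤ ℓ) :
    (∃ Z : Set V, G.IsTdMod η Z ∧ Z.ncard ≤ k) ↔
      (∃ Z : Set V, (G ⊔ SimpleGraph.fromEdgeSet {s(u, v)}).IsTdMod η Z ∧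
        Z.ncard ≤ k) := by
  obtain ⟨Z₀, hZ₀, hZ₀_min, hZ₀X⟩ := h2
  obtain ⟨P, -, hP⟩ := h1
  let incl := (SimpleGraph.Embedding.induce (G := G) (X ∪ {u, v})).toHom
  have hPX : ∀ i, ∀ w ∈ ((P i).map incl).support, w ∈ X ∪ {u, v} := fun i w hw => by
    obtain ⟨x, -, rfl⟩ := List.mem_map.1 ((P i).support_map incl ▸ hw)
    exact x.2
  refine ⟨fun ⟨Z, hZ, hZk⟩ => ⟨Z₀, hZ₀.sup_edge fun hu hv => ?_, (hZ₀_min Z hZ).trans hZk⟩,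
    fun ⟨Z, hZ, hZk⟩ => ⟨Z, hZ.of_le le_sup_left, hZk⟩⟩
  exact SimpleGraph.exists_internallyDisjoint_induce_compl (u := u) (v := v)
    (SimpleGraph.Walk.InternallyDisjoint.map hP incl Subtype.val_injective) hPX hZ₀X hu hv
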